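/- Let a and b be relatively prime integers both greater than 1 and let c be an odd integer greater than 1. Suppose (x1, y1, z1), ..., (xn, yn, zn) are solutions in positive integers to a^x + b^y = c^z such that gcd(x1, ..., xn) = 1. Then there exists a nonnegative integer t such that a ≡ b^t (mod c) or a ≡ -b^t (mod c). -/

import Mathlib

/-!
Every solution gives `a ^ x ≡ -b ^ y (mod c)`, and one solution already makes `a` and `b`
units mod `c`. So in `(ZMod c)ˣ` the powers `u ^ xᵢ` of `u = a` all lie in the subgroup
`H = ⟨b, -1⟩`. The image of `u` in the quotient by `H` then has order dividing every `xᵢ`,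
hence dividing their gcd `1`; so `u ∈ H`, i.e. `u = ±b ^ t`.
-/

theorem Subgroup.mem_of_pow_mem_of_finset_gcd_eq_one {G ι : Type*} [Group G] {H : Subgroup G}
    [H.Normal] {g : G} {s : Finset ι} {e : ι → ℕ} (hpow : ∀ i ∈ s, g ^ e i ∈ H)
    (hgcd : s.gcd e = 1) : g ∈ H := by
  have hdvd : orderOf (g : G ⧸ H) ∣ s.gcd e :=
    Finset.dvd_gcd fun i hi ↦ orderOf_dvd_of_pow_eq_one <| by
      rw [← QuotientGroup.mk_pow, QuotientGroup.eq_one_iff]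
      exact hpow i hi
  rwa [hgcd, Nat.dvd_one, orderOf_eq_one_iff, QuotientGroup.eq_one_iff] at hdvd

theorem Subgroup.exists_pow_eq_or_eq_neg_pow_of_mem_zpowers_sup {G : Type*} [CommGroup G]
    [HasDistribNeg G] [Finite G] {u v : G}
    (h : u ∈ zpowers v ⊔ zpowers (-1)) : ∃ t : ℕ, u = v ^ t ∨ u = -v ^ t := by
  obtain ⟨_, hv, _, hsign, rfl⟩ := mem_sup.mp h
  obtain ⟨t, rfl⟩ := mem_powers_iff_mem_zpowers.mpr hv
  obtain ⟨m, rfl⟩ := mem_powers_iff_mem_zpowers.mpr hsign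
  refine ⟨t, ?_⟩
  rcases neg_one_pow_eq_or G m with h | h <;> simp [h]

theorem Nat.Coprime.coprime_of_pow_add_pow_eq_pow {a b c x y z : ℕ} (hab : a.Coprime b)
    (hx : x ≠ 0) (hz : z ≠ 0) (h : a ^ x + b ^ y = c ^ z) : a.Coprime c := by
  have hb : a.gcd c ∣ b ^ y := by
    have : a.gcd c ∣ c ^ z - a ^ x :=
      Nat.dvd_sub ((Nat.gcd_dvd_right a c).pow hz) ((Nat.gcd_dvd_left a c).pow hx)
    rwa [← h, Nat.add_sub_cancel_left] at this
  exact Nat.eq_one_of_dvd_coprimes (hab.pow_right y) (Nat.gcd_dvd_left a c) hb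

theorem ZMod.natCast_pow_eq_neg_of_pow_add_pow_eq_pow {a b c x y z : ℕ} (hz : z ≠ 0)
    (h : a ^ x + b ^ y = c ^ z) : (a : ZMod c) ^ x = -(b : ZMod c) ^ y := by
  have := congrArg (Nat.cast : ℕ → ZMod c) h
  push_cast at this
  rw [ZMod.natCast_self, zero_pow hz] at this
  exact eq_neg_of_add_eq_zero_left this

theorem a_congruent_pm_power_b_general (a b c : ℕ)
    (hab : Nat.Coprime a b)
    (n : ℕ) (x y z : Fin n → ℕ)
    (hx : ∀ i, 0 < x i) (hy : ∀ i, 0 < y i) (hz : ∀ i, 0 < z i)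
    (heq : ∀ i, a ^ x i + b ^ y i = c ^ z i)
    (hgcd : Finset.univ.gcd x = 1) :
    ∃ t : ℕ, (a : ZMod c) = (b : ZMod c) ^ t ∨ (a : ZMod c) = -(b : ZMod c) ^ t := by
  obtain ⟨i₀, -⟩ : (Finset.univ : Finset (Fin n)).Nonempty :=
    Finset.nonempty_iff_ne_empty.mpr fun h ↦ by simp [h] at hgcd
  have hac := hab.coprime_of_pow_add_pow_eq_pow (hx i₀).ne' (hz i₀).ne' (heq i₀)
  have hbc := hab.symm.coprime_of_pow_add_pow_eq_pow (hy i₀).ne' (hz i₀).ne'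
    ((add_comm _ _).trans (heq i₀))
  set u := ZMod.unitOfCoprime a hac
  set v := ZMod.unitOfCoprime b hbc
  have hu : u ∈ Subgroup.zpowers v ⊔ Subgroup.zpowers (-1) := by
    refine Subgroup.mem_of_pow_mem_of_finset_gcd_eq_one (fun i _ ↦ ?_) hgcd
    have : u ^ x i = v ^ y i * -1 := by
      ext
      simpa [u, v] using ZMod.natCast_pow_eq_neg_of_pow_add_pow_eq_pow (hz i).ne' (heq i)
    rw [this]
    exact Subgroup.mul_mem_sup (Subgroup.npow_mem_zpowers v _) (Subgroup.mem_zpowers _)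
  obtain ⟨t, ht | ht⟩ := Subgroup.exists_pow_eq_or_eq_neg_pow_of_mem_zpowers_sup hu
  · exact ⟨t, .inl (by simpa [u, v] using congrArg Units.val ht)⟩
  · exact ⟨t, .inr (by simpa [u, v] using congrArg Units.val ht)⟩

/-- Suppose `(x 1, y 1, z 1), ..., (x n, y n, z n)` are positive solutions of
`a^x + b^y = c^z` with `gcd(x 1, ..., x n) = 1`. Then `a ≡ ±b^t (mod c)` for some
nonnegative integer `t`. -/
theorem a_congruent_pm_power_b (a b c : ℕ) (ha : 1 < a) (hb : 1 < b)
    (hab : Nat.Coprime a b) (hc : 1 < c) (hcodd : Odd c)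
    (n : ℕ) (hn : 0 < n) (x y z : Fin n → ℕ)
    (hx : ∀ i, 0 < x i) (hy : ∀ i, 0 < y i) (hz : ∀ i, 0 < z i)
    (heq : ∀ i, a ^ x i + b ^ y i = c ^ z i)
    (hgcd : Finset.univ.gcd x = 1) :
    ∃ t : ℕ, (a : ZMod c) = (b : ZMod c) ^ t ∨ (a : ZMod c) = -(b : ZMod c) ^ t :=
  a_congruent_pm_power_b_general a b c hab n x y z hx hy hz heq hgcd
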